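/- arXiv:0804.0025 — 3 statements merged into one kernel-verified Lean document; each statement's English description precedes it below -/
import Mathlib

section
/- Let A be a linear map between n-dimensional real inner product spaces with singular values λ_1 ≤ λ_2 ≤ ... ≤ λ_n. Then the operator norm of the induced map Λ^k A on k-th exterior powers equals λ_{n-k+1} λ_{n-k+2} ⋯ λ_n, the product of the k largest singular values. -/
/-!
Since `compound k` is the matrix of the functor `Λ^k`, it is multiplicative and commutes with
transposition, so `‖Λ^k A‖² = ‖Λ^k (AᵀA)‖`. Writing `AᵀA = U D Uᵀ` with `U` orthogonal and
`D` diagonal, `Λ^k U` is orthogonal and `Λ^k D` is diagonal with entries the products of `k`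
eigenvalues of `AᵀA`. Hence `‖Λ^k A‖²` is the largest product of `k` squared singular values,
attained by the `k` largest ones.
-/

/-- The multiset of singular values of a real square matrix `A`. -/
noncomputable def singularValues {n : ℕ} (A : Matrix (Fin n) (Fin n) ℝ) : Multiset ℝ :=
  (Finset.univ.val : Multiset (Fin n)).map fun i =>
    Real.sqrt ((Matrix.isHermitian_conjTranspose_mul_self A).eigenvalues i)

/-- The `k`-th compound matrix of `A`, i.e. the matrix of the induced map `Λ^k A` on the
`k`-th exterior power, in the orthonormal basis of increasing wedges of standard basis
vectors: its entries are the `k×k` minors of `A`. -/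
noncomputable def compound {n : ℕ} (k : ℕ) (A : Matrix (Fin n) (Fin n) ℝ) :
    Matrix {s : Finset (Fin n) // s.card = k} {s : Finset (Fin n) // s.card = k} ℝ :=
  fun s t => (A.submatrix (fun i => ((s.1.orderIsoOfFin s.2) i : Fin n))
    (fun j => ((t.1.orderIsoOfFin t.2) j : Fin n))).det

open Finset Matrix

lemma Finset.prod_orderEmbOfFin {α M : Type*} [LinearOrder α] [CommMonoid M] (s : Finset α)
    {k : ℕ} (h : s.card = k) (f : α → M) : ∏ j, f (s.orderEmbOfFin h j) = ∏ i ∈ s, f i := by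
  conv_rhs => rw [← map_orderEmbOfFin_univ s h, prod_map]
  rfl

noncomputable def wedgeBasis (R : Type*) [CommRing R] (n k : ℕ) :
    Module.Basis {s : Finset (Fin n) // s.card = k} R (⋀[R]^k (Fin n → R)) :=
  ((Pi.basisFun R (Fin n)).exteriorPower k).reindex
    (Equiv.subtypeEquivRight fun _ => Set.powersetCard.mem_iff)

lemma compound_eq_toMatrixAlgEquiv {n : ℕ} (k : ℕ) (A : Matrix (Fin n) (Fin n) ℝ) :
    compound k A =
      LinearMap.toMatrixAlgEquiv (wedgeBasis ℝ n k) (exteriorPower.map k (toLin' A)) := by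
  ext s t
  rw [LinearMap.toMatrixAlgEquiv_apply, wedgeBasis, Module.Basis.reindex_apply,
    Module.Basis.repr_reindex_apply, exteriorPower.basis_apply,
    exteriorPower.map_apply_ιMulti_family, exteriorPower.basis_repr_apply,
    exteriorPower.ιMulti_family, exteriorPower.ιMultiDual_apply_ιMulti, ← det_transpose]
  unfold compound
  congr 1
  ext i j
  simp [Set.powersetCard.ofFinEmbEquiv_symm_apply, Finset.coe_orderIsoOfFin_apply]

lemma compound_mul {n k : ℕ} (A B : Matrix (Fin n) (Fin n) ℝ) :
    compound k (A * B) = compound k A * compound k B := by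
  rw [compound_eq_toMatrixAlgEquiv, toLin'_mul, exteriorPower.map_comp, ← Module.End.mul_eq_comp,
    map_mul, ← compound_eq_toMatrixAlgEquiv, ← compound_eq_toMatrixAlgEquiv]

lemma compound_one {n k : ℕ} : compound k (1 : Matrix (Fin n) (Fin n) ℝ) = 1 := by
  rw [compound_eq_toMatrixAlgEquiv, toLin'_one, exteriorPower.map_id, ← Module.End.one_eq_id,
    map_one]

lemma compound_apply {n k : ℕ} (A : Matrix (Fin n) (Fin n) ℝ)
    (s t : {s : Finset (Fin n) // s.card = k}) :
    compound k A s t = (A.submatrix (s.1.orderEmbOfFin s.2) (t.1.orderEmbOfFin t.2)).det :=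
  rfl

lemma compound_conjTranspose {n k : ℕ} (A : Matrix (Fin n) (Fin n) ℝ) :
    compound k Aᴴ = (compound k A)ᴴ := by
  ext s t
  rw [conjTranspose_apply, star_trivial, compound_apply, compound_apply, ← det_transpose]
  rfl

lemma compound_diagonal {n k : ℕ} (d : Fin n → ℝ) :
    compound k (diagonal d) =
      diagonal fun s : {s : Finset (Fin n) // s.card = k} => ∏ i ∈ s.1, d i := by
  ext s t
  rw [compound_apply]
  obtain rfl | hst := eq_or_ne s t
  · rw [diagonal_apply_eq, submatrix_diagonal _ _ (s.1.orderEmbOfFin s.2).injective,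
      det_diagonal]
    exact prod_orderEmbOfFin s.1 s.2 d
  · rw [diagonal_apply_ne _ hst]
    obtain ⟨x, hxs, hxt⟩ : ∃ x ∈ s.1, x ∉ t.1 := by
      by_contra! h
      exact hst (Subtype.ext (eq_of_subset_of_card_le h (by rw [s.2, t.2])))
    obtain ⟨i, rfl⟩ : ∃ i, s.1.orderEmbOfFin s.2 i = x := by
      rwa [← Set.mem_range, range_orderEmbOfFin]
    refine det_eq_zero_of_row_eq_zero i fun j => diagonal_apply_ne _ fun h => hxt ?_
    exact h ▸ orderEmbOfFin_mem t.1 t.2 j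

open scoped Matrix.Norms.L2Operator

lemma compound_mem_unitaryGroup {n k : ℕ} {U : Matrix (Fin n) (Fin n) ℝ}
    (hU : U ∈ unitaryGroup (Fin n) ℝ) : compound k U ∈ unitaryGroup _ ℝ := by
  rw [mem_unitaryGroup_iff', star_eq_conjTranspose, ← compound_conjTranspose, ← compound_mul,
    ← star_eq_conjTranspose, mem_unitaryGroup_iff'.1 hU, compound_one]

lemma Matrix.IsHermitian.l2_opNorm_compound {n k : ℕ} {H : Matrix (Fin n) (Fin n) ℝ}
    (hH : H.IsHermitian) :
    ‖compound k H‖ =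
      ‖fun s : {s : Finset (Fin n) // s.card = k} => ∏ i ∈ s.1, hH.eigenvalues i‖ := by
  have hV := compound_mem_unitaryGroup (k := k) hH.eigenvectorUnitary.2
  conv_lhs => rw [hH.spectral_theorem, Unitary.conjStarAlgAut_apply]
  rw [compound_mul, compound_mul, star_eq_conjTranspose, compound_conjTranspose,
    ← star_eq_conjTranspose, mul_assoc, CStarRing.norm_mem_unitary_mul _ hV,
    CStarRing.norm_mul_mem_unitary _ (Unitary.star_mem hV), compound_diagonal,
    l2_opNorm_diagonal]
  rfl

lemma pi_norm_prod_subsets_comp_perm {ι : Type*} [Fintype ι] [DecidableEq ι] (k : ℕ)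
    (w : ι → ℝ) (σ : Equiv.Perm ι) :
    ‖fun s : {s : Finset ι // s.card = k} => ∏ i ∈ s.1, w (σ i)‖ =
      ‖fun s : {s : Finset ι // s.card = k} => ∏ i ∈ s.1, w i‖ := by
  let e : {s : Finset ι // s.card = k} ≃ {s : Finset ι // s.card = k} :=
    σ.finsetCongr.subtypeEquiv fun s => by simp [Equiv.finsetCongr_apply]
  have he : (fun s : {s : Finset ι // s.card = k} => ∏ i ∈ s.1, w (σ i)) =
      (fun s : {s : Finset ι // s.card = k} => ∏ i ∈ s.1, w i) ∘ e := by
    funext s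
    simp [e, Equiv.finsetCongr_apply]
  rw [he, e.surjective.pi_norm_comp]

-- `f` maps the `k - 1 - j` indices above `j` injectively to the `n - 1 - f j` indices above `f j`.
lemma StrictMono.fin_val_add_le {k n : ℕ} {f : Fin k → Fin n} (hf : StrictMono f) (j : Fin k) :
    (f j : ℕ) + k ≤ n + j := by
  have := card_le_card_of_injOn f (fun i hi => mem_Ioi.2 (hf (mem_Ioi.1 hi))) hf.injective.injOn
    (s := Ioi j) (t := Ioi (f j))
  simp only [Fin.card_Ioi] at this
  omega

lemma prod_le_prod_top_of_monotone {n k : ℕ} {w : Fin n → ℝ} (hw0 : ∀ i, 0 ≤ w i)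
    (hw : Monotone w) {s : Finset (Fin n)} (hs : s.card = k) :
    ∏ i ∈ s, w i ≤ ∏ i ∈ univ.filter (fun i : Fin n => n - k ≤ (i : ℕ)), w i := by
  obtain ⟨m, rfl⟩ : ∃ m, n = m + k :=
    ⟨n - k, by have := hs ▸ card_le_univ s; simp only [Fintype.card_fin] at this; omega⟩
  have hlow (x : Fin m) : ¬ m + k - k ≤ (Fin.castAdd k x : ℕ) := by simp
  have hhigh (x : Fin k) : m + k - k ≤ (Fin.natAdd m x : ℕ) := by simp
  rw [← prod_orderEmbOfFin s hs, prod_filter, Fin.prod_univ_add]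
  simp only [hlow, hhigh, if_false, if_true, prod_const_one, one_mul]
  -- the `j`-th smallest element of `s` is at most `m + j`
  refine prod_le_prod (fun j _ => hw0 _) fun j _ => hw ?_
  have := (s.orderEmbOfFin hs).strictMono.fin_val_add_le j
  rw [Fin.le_def, Fin.val_natAdd]
  omega

lemma pi_norm_prod_subsets_of_monotone {n k : ℕ} (hk : k ≤ n) {w : Fin n → ℝ}
    (hw0 : ∀ i, 0 ≤ w i) (hw : Monotone w) :
    ‖fun s : {s : Finset (Fin n) // s.card = k} => ∏ i ∈ s.1, w i‖ =
      ∏ i ∈ univ.filter (fun i : Fin n => n - k ≤ (i : ℕ)), w i := by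
  have htop : (univ.filter fun i : Fin n => n - k ≤ (i : ℕ)).card = k := by
    have := card_filter_add_card_filter_not (s := univ) (fun i : Fin n => (i : ℕ) < n - k)
    simp only [not_lt, Fin.card_filter_val_lt, card_univ, Fintype.card_fin] at this
    omega
  have hnorm (s : Finset (Fin n)) : ‖∏ i ∈ s, w i‖ = ∏ i ∈ s, w i :=
    Real.norm_of_nonneg (prod_nonneg fun i _ => hw0 i)
  refine le_antisymm ((pi_norm_le_iff_of_nonneg (prod_nonneg fun i _ => hw0 i)).2 fun s => ?_) ?_
  · rw [hnorm]
    exact prod_le_prod_top_of_monotone hw0 hw s.2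
  · simpa only [hnorm] using norm_le_pi_norm (fun s : {s : Finset (Fin n) // s.card = k} =>
      ∏ i ∈ s.1, w i) ⟨_, htop⟩

lemma eq_of_monotone_of_map_univ_eq {α : Type*} [LinearOrder α] {n : ℕ} {f g : Fin n → α}
    (hf : Monotone f) (hg : Monotone g) (h : univ.val.map f = univ.val.map g) : f = g := by
  rw [Fin.univ_val_map, Fin.univ_val_map, Multiset.coe_eq_coe] at h
  exact List.ofFn_injective (h.eq_of_sortedLE (List.sortedLE_ofFn_iff.2 hf)
    (List.sortedLE_ofFn_iff.2 hg))

lemma exists_perm_comp_eq_of_monotone {α : Type*} [LinearOrder α] {n : ℕ} {f g : Fin n → α}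
    (hg : Monotone g) (h : univ.val.map f = univ.val.map g) :
    ∃ σ : Equiv.Perm (Fin n), f ∘ σ = g := by
  refine ⟨Tuple.sort f, eq_of_monotone_of_map_univ_eq (Tuple.monotone_sort f) hg ?_⟩
  rw [← h, ← Multiset.map_map, Multiset.map_univ_val_equiv]

/-- If `A` has singular values `λ_1 ≤ ⋯ ≤ λ_n`, then the operator norm of `Λ^k A`
equals the product `λ_{n-k+1} ⋯ λ_n` of the `k` largest singular values. -/
theorem opNorm_exteriorPower_map {n k : ℕ} (hk : k ≤ n) (A : Matrix (Fin n) (Fin n) ℝ)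
    (l : Fin n → ℝ) (hmono : Monotone l)
    (hsv : singularValues A = (Finset.univ.val : Multiset (Fin n)).map l) :
    ‖Matrix.toEuclideanCLM (𝕜 := ℝ) (compound k A)‖ =
      ∏ i ∈ Finset.univ.filter (fun i : Fin n => n - k ≤ (i : ℕ)), l i := by
  set hH := isHermitian_conjTranspose_mul_self A
  obtain ⟨σ, hσ⟩ := exists_perm_comp_eq_of_monotone hmono hsv
  have hl0 (i : Fin n) : 0 ≤ l i := hσ ▸ Real.sqrt_nonneg _
  have hl (i : Fin n) : l i ^ 2 = hH.eigenvalues (σ i) := by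
    rw [← hσ, Function.comp_apply,
      Real.sq_sqrt ((posSemidef_conjTranspose_mul_self A).eigenvalues_nonneg _)]
  have hsq : ‖compound k A‖ ^ 2 =
      (∏ i ∈ univ.filter (fun i : Fin n => n - k ≤ (i : ℕ)), l i) ^ 2 := by
    rw [sq, ← l2_opNorm_conjTranspose_mul_self, ← compound_conjTranspose, ← compound_mul,
      hH.l2_opNorm_compound, ← pi_norm_prod_subsets_comp_perm k _ σ, ← prod_pow]
    simp only [← hl]
    exact pi_norm_prod_subsets_of_monotone hk (fun i => sq_nonneg _)
      fun i j hij => pow_le_pow_left₀ (hl0 i) (hmono hij) 2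
  rw [← cstar_norm_def]
  exact (pow_left_inj₀ (norm_nonneg _) (prod_nonneg fun i _ => hl0 i) two_ne_zero).1 hsq
end

section
/- Let λ_1 ≤ λ_2 ≤ ... ≤ λ_n be positive reals, 1 ≤ k < n/2, and σ_k the k-th elementary symmetric polynomial of the λ_i. Then λ_n/λ_1 ≤ σ_k^{n/k} / (λ_1 λ_2 ⋯ λ_n). -/
/-- The `k`-th elementary symmetric polynomial of the values `l 1, …, l n`. -/
def esymmFun (n k : ℕ) (l : Fin n → ℝ) : ℝ :=
  ∑ s ∈ Finset.powersetCard k (Finset.univ : Finset (Fin n)), ∏ i ∈ s, l i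

/-- For positive `λ_1 ≤ ⋯ ≤ λ_n` and `1 ≤ k < n/2`,
`λ_n/λ_1 ≤ σ_k^{n/k} / (λ_1 ⋯ λ_n)` (real exponent `n/k`). -/
theorem ratio_le_esymm_rpow_div_prod (n k : ℕ) (hk : 1 ≤ k) (h2k : 2 * k < n)
    (l : Fin n → ℝ) (hmono : Monotone l) (hpos : ∀ i, 0 < l i) :
    l ⟨n - 1, by omega⟩ / l ⟨0, by omega⟩ ≤
      esymmFun n k l ^ ((n : ℝ) / (k : ℝ)) / ∏ i, l i := by
  set L : ℕ → ℝ := fun j => if h : j < n then l ⟨j, h⟩ else 1 with hLdef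
  have hLpos : ∀ j, 0 < L j := by
    intro j
    by_cases h : j < n
    · simp only [hLdef, dif_pos h]; exact hpos _
    · simp only [hLdef, dif_neg h]; norm_num
  have hLmono : ∀ a b : ℕ, a ≤ b → b < n → L a ≤ L b := by
    intro a b hab hb
    have ha : a < n := lt_of_le_of_lt hab hb
    simp only [hLdef, dif_pos ha, dif_pos hb]
    exact hmono (show (⟨a, ha⟩ : Fin n) ≤ ⟨b, hb⟩ from hab)
  set P := ∏ j ∈ Finset.Ico (n - k) n, L j with hP
  set M := ∏ j ∈ Finset.Ico k (n - k), L j with hM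
  set B := ∏ j ∈ Finset.Ico 1 k, L j with hB
  have hPpos : 0 < P := Finset.prod_pos fun j _ => hLpos j
  have hMpos : 0 < M := Finset.prod_pos fun j _ => hLpos j
  have hBpos : 0 < B := Finset.prod_pos fun j _ => hLpos j
  have hprodsplit : (∏ i, l i) = (L 0 * B) * M * P := by
    have h0 : (∏ i, l i) = ∏ j ∈ Finset.range n, L j := by
      rw [Finset.prod_range fun j => L j]
      apply Finset.prod_congr rfl
      intro i _
      simp only [hLdef, dif_pos i.isLt]
    rw [h0, Finset.range_eq_Ico,
      ← Finset.prod_Ico_consecutive L (Nat.zero_le (n - k)) (by omega : n - k ≤ n),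
      ← Finset.prod_Ico_consecutive L (Nat.zero_le k) (by omega : k ≤ n - k),
      ← Finset.prod_Ico_consecutive L (Nat.zero_le 1) hk]
    have h1 : ∏ j ∈ Finset.Ico 0 1, L j = L 0 := by simp
    rw [h1]
  have hsub : ∀ m ∈ Finset.Ico (n - k) n, m < n := fun m hm => (Finset.mem_Ico.mp hm).2
  have hsigma : P ≤ esymmFun n k l := by
    set T := Finset.attachFin (Finset.Ico (n - k) n) hsub with hT
    have hTmem : T ∈ Finset.powersetCard k (Finset.univ : Finset (Fin n)) := by
      rw [Finset.mem_powersetCard_univ, hT, Finset.card_attachFin, Nat.card_Ico]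
      omega
    have hTprod : ∏ i ∈ T, l i = P := by
      rw [hP]
      refine Finset.prod_nbij' (fun i => (i : ℕ))
        (fun m => if h : m < n then (⟨m, h⟩ : Fin n) else ⟨0, by omega⟩) ?_ ?_ ?_ ?_ ?_
      · intro i hi; exact (Finset.mem_attachFin hsub).mp hi
      · intro m hm; rw [Finset.mem_attachFin]; simpa [dif_pos (hsub m hm)] using hm
      · intro i _; simp [i.isLt]
      · intro m hm; simp [dif_pos (hsub m hm)]
      · intro i hi
        simp only [hLdef, dif_pos i.isLt]
    calc P = ∏ i ∈ T, l i := hTprod.symm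
      _ ≤ esymmFun n k l :=
        Finset.single_le_sum (f := fun s => ∏ i ∈ s, l i)
          (fun s _ => Finset.prod_nonneg fun i _ => (hpos i).le) hTmem
  have hMk : M ^ k ≤ P ^ (n - 2 * k) := by
    have hterm : ∀ j ∈ Finset.Ico k (n - k), L j ^ k ≤ P := by
      intro j hj
      obtain ⟨hj1, hj2⟩ := Finset.mem_Ico.mp hj
      calc L j ^ k = ∏ _m ∈ Finset.Ico (n - k) n, L j := by
            rw [Finset.prod_const, Nat.card_Ico]; congr 1; omega
        _ ≤ P := Finset.prod_le_prod (fun m _ => (hLpos j).le)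
            (fun m hm => hLmono j m (by have := (Finset.mem_Ico.mp hm).1; omega)
              (Finset.mem_Ico.mp hm).2)
    calc M ^ k = ∏ j ∈ Finset.Ico k (n - k), L j ^ k := by rw [← Finset.prod_pow]
      _ ≤ ∏ _j ∈ Finset.Ico k (n - k), P :=
          Finset.prod_le_prod (fun j _ => pow_nonneg (hLpos j).le k) hterm
      _ = P ^ (n - 2 * k) := by rw [Finset.prod_const, Nat.card_Ico]; congr 1; omega
  have hk0 : (0 : ℝ) < (k : ℝ) := by exact_mod_cast hk
  set r : ℝ := ((n : ℝ) - 2 * k) / k with hr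
  have hMr : M ≤ P ^ r := by
    have h := Real.rpow_le_rpow (by positivity) hMk (by positivity : (0 : ℝ) ≤ 1 / k)
    rw [← Real.rpow_natCast M k, ← Real.rpow_natCast P (n - 2 * k),
      ← Real.rpow_mul hMpos.le, ← Real.rpow_mul hPpos.le] at h
    have h1 : (k : ℝ) * (1 / k) = 1 := by field_simp
    have h2 : ((n - 2 * k : ℕ) : ℝ) * (1 / k) = r := by
      rw [Nat.cast_sub (by omega : 2 * k ≤ n), hr]
      push_cast
      ring
    rwa [h1, h2, Real.rpow_one] at h
  have h5 : L (n - 1) * B ≤ P := by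
    have hIco : Finset.Ico (n - k) n = Finset.Ico (n - k) ((n - 1) + 1) := by congr 1; omega
    have hsplit : P = (∏ j ∈ Finset.Ico (n - k) (n - 1), L j) * L (n - 1) := by
      rw [hP, hIco, Finset.prod_Ico_succ_top (by omega : n - k ≤ n - 1)]
    have hB' : B ≤ ∏ j ∈ Finset.Ico (n - k) (n - 1), L j := by
      rw [hB, Finset.prod_Ico_eq_prod_range, Finset.prod_Ico_eq_prod_range]
      have hcard : k - 1 = (n - 1) - (n - k) := by omega
      rw [hcard]
      apply Finset.prod_le_prod (fun j _ => (hLpos _).le)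
      intro j hj
      have hj' := Finset.mem_range.mp hj
      exact hLmono _ _ (by omega) (by omega)
    calc L (n - 1) * B ≤ L (n - 1) * ∏ j ∈ Finset.Ico (n - k) (n - 1), L j :=
          mul_le_mul_of_nonneg_left hB' (hLpos _).le
      _ = P := by rw [hsplit]; ring
  have hprodpos : 0 < ∏ i, l i := Finset.prod_pos fun i _ => hpos i
  rw [div_le_div_iff₀ (hpos _) hprodpos]
  have hl0 : l ⟨0, by omega⟩ = L 0 := by simp only [hLdef, dif_pos (by omega : 0 < n)]
  have hln : l ⟨n - 1, by omega⟩ = L (n - 1) := by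
    simp only [hLdef, dif_pos (by omega : n - 1 < n)]
  rw [hprodsplit, hl0, hln]
  have step2 : (L (n - 1) * B) * (M * P) ≤ P * (P ^ r * P) :=
    mul_le_mul h5 (mul_le_mul_of_nonneg_right hMr hPpos.le) (by positivity) hPpos.le
  have hexp : (n : ℝ) / k = 1 + (r + 1) := by rw [hr]; field_simp; ring
  have step3 : P * (P ^ r * P) = P ^ ((n : ℝ) / k) := by
    rw [hexp, Real.rpow_add hPpos, Real.rpow_add hPpos, Real.rpow_one]
  have step4 : P ^ ((n : ℝ) / k) ≤ esymmFun n k l ^ ((n : ℝ) / k) :=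
    Real.rpow_le_rpow hPpos.le hsigma (by positivity)
  calc L (n - 1) * (L 0 * B * M * P) = L 0 * ((L (n - 1) * B) * (M * P)) := by ring
    _ ≤ L 0 * (P * (P ^ r * P)) := mul_le_mul_of_nonneg_left step2 (hLpos 0).le
    _ = L 0 * P ^ ((n : ℝ) / k) := by rw [step3]
    _ ≤ L 0 * esymmFun n k l ^ ((n : ℝ) / k) := mul_le_mul_of_nonneg_left step4 (hLpos 0).le
    _ = esymmFun n k l ^ ((n : ℝ) / k) * L 0 := mul_comm _ _
end

section
/- Let f : M → N be a diffeomorphism between oriented n-dimensional Riemannian manifolds with positive Jacobian, 0 ≤ m ≤ n, and let α > 1, β = ∞, s = α/(α-1). Then σ_m(f^{-1})^α · J_{f^{-1}}^{-1} is uniformly bounded on N if and only if σ_{n-m}(f)^s · J_f^{-1} is uniformly bounded on M. -/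
open Real

theorem exists_forall_rpow_le_iff {ι : Type*} {g : ι → ℝ} (hg : ∀ i, 0 ≤ g i) {p : ℝ}
    (hp : 0 < p) : (∃ C, ∀ i, g i ^ p ≤ C) ↔ ∃ C, ∀ i, g i ≤ C := by
  constructor
  · rintro ⟨C, hC⟩
    refine ⟨max C 0 ^ p⁻¹, fun i => ?_⟩
    rw [le_rpow_inv_iff_of_pos (hg i) (le_max_right C 0) hp]
    exact (hC i).trans (le_max_left C 0)
  · rintro ⟨C, hC⟩
    exact ⟨max C 0 ^ p, fun i => rpow_le_rpow (hg i) ((hC i).trans (le_max_left C 0)) hp.le⟩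

/-- The pointwise identity `σ_m(f⁻¹)^α J_{f⁻¹}⁻¹ = (σ_{n-m}(f)^s J_f⁻¹)^(α-1)`,
with `σ = σ_{n-m}(f)` and `J = J_f`. -/
theorem div_rpow_mul_eq_rpow_div_rpow_sub_one {σ J α s : ℝ} (hσ : 0 ≤ σ) (hJ : 0 < J)
    (hs : s * (α - 1) = α) : (σ / J) ^ α * J = (σ ^ s / J) ^ (α - 1) := by
  rw [div_rpow hσ hJ.le, div_rpow (rpow_nonneg hσ s) hJ.le, ← rpow_mul hσ, hs,
    rpow_sub_one hJ.ne']
  field_simp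

/-- Pointwise duality for the `BD` classes with `β = ∞`: for a diffeomorphism `f` with
positive Jacobian `J` and principal invariants `σ_{n-m}(f)` on `M`, and with
`σ_m(f⁻¹)`, `J_{f⁻¹}` on `N` satisfying `σ_m(f⁻¹, f x) = σ_{n-m}(f,x)/J_f(x)` and
`J_{f⁻¹}(f x) = J_f(x)⁻¹`, and `α > 1`, `s = α/(α-1)`:
`σ_m(f⁻¹)^α · J_{f⁻¹}⁻¹` is uniformly bounded on `N` iff `σ_{n-m}(f)^s · J_f⁻¹` is
uniformly bounded on `M`. -/
theorem bd_infinity_duality {M N : Type*} (f : M ≃ N)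
    (σnm J : M → ℝ) (σm Jinv : N → ℝ)
    (hJ : ∀ x, 0 < J x) (hσ : ∀ x, 0 ≤ σnm x)
    (hσrel : ∀ x, σm (f x) = σnm x / J x)
    (hJrel : ∀ x, Jinv (f x) = (J x)⁻¹)
    (α s : ℝ) (hα : 1 < α) (hs : s = α / (α - 1)) :
    (∃ C : ℝ, ∀ y, σm y ^ α * (Jinv y)⁻¹ ≤ C) ↔
      (∃ C : ℝ, ∀ x, σnm x ^ s * (J x)⁻¹ ≤ C) := by
  have hsα : s * (α - 1) = α := by
    rw [hs, div_mul_cancel₀ α (sub_ne_zero.2 hα.ne')]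
  have pointwise (x : M) :
      σm (f x) ^ α * (Jinv (f x))⁻¹ = (σnm x ^ s * (J x)⁻¹) ^ (α - 1) := by
    rw [hσrel, hJrel, inv_inv, ← div_eq_mul_inv]
    exact div_rpow_mul_eq_rpow_div_rpow_sub_one (hσ x) (hJ x) hsα
  calc (∃ C : ℝ, ∀ y, σm y ^ α * (Jinv y)⁻¹ ≤ C)
      ↔ ∃ C : ℝ, ∀ x, (σnm x ^ s * (J x)⁻¹) ^ (α - 1) ≤ C := by
        simp only [← pointwise, f.forall_congr_left, f.apply_symm_apply]
    _ ↔ ∃ C : ℝ, ∀ x, σnm x ^ s * (J x)⁻¹ ≤ C :=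
        exists_forall_rpow_le_iff
          (fun x => mul_nonneg (rpow_nonneg (hσ x) s) (inv_nonneg.2 (hJ x).le)) (sub_pos.2 hα)
end
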